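/- Marsaglia polar method: let (U, V) be uniformly distributed on the punctured open unit disk A = {(u,v) ∈ ℝ² : 0 < u² + v² < 1} (law equal to Lebesgue measure restricted to A, normalized), let S = U² + V², and define X = U·√(−2 ln S / S) and Y = V·√(−2 ln S / S). Then the joint law of (X, Y) is the product of two real Gaussian measures each with mean 0 and variance 1; in particular X and Y are independent standard normal random variables. -/

import Mathlib

/-!
The map `marsaglia` is the radial map `p ↦ c(|p|²) p` with `c(s) = √(-2 ln s / s)`, and it is
inverted on the punctured plane by the radial map with `c(t) = √(e^{-t/2} / t)`, which sends a
point of squared norm `t` to one of squared norm `e^{-t/2}`. For a radial map in the plane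
whose squared norm is `g(|p|²)`, the Jacobian determinant is `g'(|p|²)`; here it is
`-e^{-|p|²/2} / 2`, which is `π` times the standard Gaussian density on `ℝ²`. By the change of
variables formula the image of Lebesgue measure on the disk is therefore `π` times the product
Gaussian measure, and comparing total masses shows that the disk has area `π`.
-/

open MeasureTheory ProbabilityTheory

/-- The punctured open unit disk in `ℝ²`. -/
def puncturedDisk : Set (ℝ × ℝ) :=
  {p : ℝ × ℝ | 0 < p.1 ^ 2 + p.2 ^ 2 ∧ p.1 ^ 2 + p.2 ^ 2 < 1}

/-- The Marsaglia polar transformation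
`(u, v) ↦ (u·√(−2 ln s / s), v·√(−2 ln s / s))` with `s = u² + v²`. -/
noncomputable def marsaglia (p : ℝ × ℝ) : ℝ × ℝ :=
  (p.1 * Real.sqrt (-2 * Real.log (p.1 ^ 2 + p.2 ^ 2) / (p.1 ^ 2 + p.2 ^ 2)),
   p.2 * Real.sqrt (-2 * Real.log (p.1 ^ 2 + p.2 ^ 2) / (p.1 ^ 2 + p.2 ^ 2)))

open Real

theorem sqrt_div_mul_sqrt_div_cancel {a b : ℝ} (ha : 0 < a) (hb : 0 < b) :
    √(a / b) * √(b / a) = 1 := by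
  rw [← sqrt_mul (div_pos ha hb).le, div_mul_div_comm, mul_comm b, div_self (by positivity),
    sqrt_one]

theorem sq_add_sq_pos_iff {p : ℝ × ℝ} : 0 < p.1 ^ 2 + p.2 ^ 2 ↔ p ≠ 0 := by
  obtain ⟨x, y⟩ := p
  simp only [ne_eq, Prod.mk_eq_zero, not_and_or]
  constructor
  · intro h
    by_contra! hxy
    simp [hxy.1, hxy.2] at h
  · rintro (hx | hy) <;> positivity

def radialScale (c : ℝ → ℝ) (p : ℝ × ℝ) : ℝ × ℝ :=
  (p.1 * c (p.1 ^ 2 + p.2 ^ 2), p.2 * c (p.1 ^ 2 + p.2 ^ 2))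

theorem measurable_radialScale {c : ℝ → ℝ} (hc : Measurable c) : Measurable (radialScale c) := by
  unfold radialScale
  fun_prop

theorem sq_add_sq_radialScale (c : ℝ → ℝ) (p : ℝ × ℝ) :
    (radialScale c p).1 ^ 2 + (radialScale c p).2 ^ 2 =
      (p.1 ^ 2 + p.2 ^ 2) * c (p.1 ^ 2 + p.2 ^ 2) ^ 2 := by
  simp only [radialScale]
  ring

theorem radialScale_radialScale_of_mul_eq_one {c d : ℝ → ℝ} {p : ℝ × ℝ}
    (h : d (p.1 ^ 2 + p.2 ^ 2) * c ((p.1 ^ 2 + p.2 ^ 2) * d (p.1 ^ 2 + p.2 ^ 2) ^ 2) = 1) :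
    radialScale c (radialScale d p) = p := by
  conv_lhs => rw [radialScale, sq_add_sq_radialScale]
  ext
  · simp only [radialScale]
    linear_combination p.1 * h
  · simp only [radialScale]
    linear_combination p.2 * h

noncomputable def radialScaleFDeriv (c : ℝ → ℝ) (p : ℝ × ℝ) : (ℝ × ℝ) →L[ℝ] ℝ × ℝ :=
  let a := c (p.1 ^ 2 + p.2 ^ 2)
  let b := 2 * deriv c (p.1 ^ 2 + p.2 ^ 2)
  LinearMap.toContinuousLinearMap <| Matrix.toLin (Module.Basis.finTwoProd ℝ)
    (Module.Basis.finTwoProd ℝ) !![a + b * p.1 ^ 2, b * p.1 * p.2; b * p.1 * p.2, a + b * p.2 ^ 2]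

theorem hasFDerivAt_radialScale {c : ℝ → ℝ} {p : ℝ × ℝ}
    (hc : DifferentiableAt ℝ c (p.1 ^ 2 + p.2 ^ 2)) :
    HasFDerivAt (radialScale c) (radialScaleFDeriv c p) p := by
  have hq := hc.hasDerivAt.comp_hasFDerivAt p
    (((hasFDerivAt_fst (𝕜 := ℝ) (p := p)).pow 2).add (hasFDerivAt_snd.pow 2))
  refine ((hasFDerivAt_fst.mul hq).prodMk (hasFDerivAt_snd.mul hq)).congr_fderiv ?_
  rw [radialScaleFDeriv, Matrix.toLin_finTwoProd_toContinuousLinearMap]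
  ext <;> simp <;> ring

theorem det_radialScaleFDeriv {c : ℝ → ℝ} {p : ℝ × ℝ}
    (hc : DifferentiableAt ℝ c (p.1 ^ 2 + p.2 ^ 2)) :
    (radialScaleFDeriv c p).det = deriv (fun t ↦ t * c t ^ 2) (p.1 ^ 2 + p.2 ^ 2) := by
  have hg : HasDerivAt (fun t ↦ t * c t ^ 2) _ (p.1 ^ 2 + p.2 ^ 2) :=
    (hasDerivAt_id' _).mul (hc.hasDerivAt.pow 2)
  rw [radialScaleFDeriv, LinearMap.det_toContinuousLinearMap, LinearMap.det_toLin,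
    Matrix.det_fin_two_of, hg.deriv]
  ring

noncomputable def marsagliaFactor (s : ℝ) : ℝ := √(-2 * log s / s)

theorem marsaglia_eq_radialScale : marsaglia = radialScale marsagliaFactor := rfl

noncomputable def marsagliaInvFactor (t : ℝ) : ℝ := √(exp (-t / 2) / t)

noncomputable def marsagliaInv : ℝ × ℝ → ℝ × ℝ := radialScale marsagliaInvFactor

theorem mul_marsagliaFactor_sq {s : ℝ} (hs₀ : 0 < s) (hs₁ : s < 1) :
    s * marsagliaFactor s ^ 2 = -2 * log s := by
  have := log_neg hs₀ hs₁
  rw [marsagliaFactor, sq_sqrt (div_nonneg (by linarith) hs₀.le)]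
  field_simp

theorem mul_marsagliaInvFactor_sq {t : ℝ} (ht : 0 < t) :
    t * marsagliaInvFactor t ^ 2 = exp (-t / 2) := by
  rw [marsagliaInvFactor, sq_sqrt (by positivity)]
  field_simp

theorem marsaglia_marsagliaInv {p : ℝ × ℝ} (hp : 0 < p.1 ^ 2 + p.2 ^ 2) :
    marsaglia (marsagliaInv p) = p := by
  rw [marsaglia_eq_radialScale, marsagliaInv]
  refine radialScale_radialScale_of_mul_eq_one ?_
  rw [mul_marsagliaInvFactor_sq hp, marsagliaFactor, log_exp, marsagliaInvFactor,
    show -2 * (-(p.1 ^ 2 + p.2 ^ 2) / 2) = p.1 ^ 2 + p.2 ^ 2 by ring]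
  exact sqrt_div_mul_sqrt_div_cancel (exp_pos _) hp

theorem leftInvOn_marsaglia_marsagliaInv : Set.LeftInvOn marsaglia marsagliaInv {0}ᶜ :=
  fun _ hp ↦ marsaglia_marsagliaInv (sq_add_sq_pos_iff.2 hp)

theorem marsagliaInv_marsaglia {q : ℝ × ℝ} (hq : q ∈ puncturedDisk) :
    marsagliaInv (marsaglia q) = q := by
  obtain ⟨hs₀, hs₁⟩ := hq
  rw [marsaglia_eq_radialScale, marsagliaInv]
  refine radialScale_radialScale_of_mul_eq_one ?_
  rw [mul_marsagliaFactor_sq hs₀ hs₁, marsagliaFactor, marsagliaInvFactor,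
    show -(-2 * log (q.1 ^ 2 + q.2 ^ 2)) / 2 = log (q.1 ^ 2 + q.2 ^ 2) by ring, exp_log hs₀]
  exact sqrt_div_mul_sqrt_div_cancel (by linarith [log_neg hs₀ hs₁]) hs₀

theorem image_marsagliaInv : marsagliaInv '' {0}ᶜ = puncturedDisk := by
  refine subset_antisymm ?_ fun q hq ↦ ⟨marsaglia q, ?_, marsagliaInv_marsaglia hq⟩
  · rintro _ ⟨p, hp, rfl⟩
    have hp := sq_add_sq_pos_iff.2 hp
    rw [puncturedDisk, Set.mem_ofPred_eq, marsagliaInv, sq_add_sq_radialScale,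
      mul_marsagliaInvFactor_sq hp]
    exact ⟨exp_pos _, exp_lt_one_iff.2 (by linarith)⟩
  · obtain ⟨hs₀, hs₁⟩ := hq
    rw [Set.mem_compl_singleton_iff, ← sq_add_sq_pos_iff, marsaglia_eq_radialScale,
      sq_add_sq_radialScale, mul_marsagliaFactor_sq hs₀ hs₁]
    linarith [log_neg hs₀ hs₁]

theorem differentiableAt_marsagliaInvFactor {t : ℝ} (ht : 0 < t) :
    DifferentiableAt ℝ marsagliaInvFactor t :=
  ((differentiableAt_id.neg.div_const 2).exp.div differentiableAt_id ht.ne').sqrt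
    (div_pos (exp_pos _) ht).ne'

theorem det_fderiv_marsagliaInv {p : ℝ × ℝ} (hp : 0 < p.1 ^ 2 + p.2 ^ 2) :
    (radialScaleFDeriv marsagliaInvFactor p).det = -(exp (-(p.1 ^ 2 + p.2 ^ 2) / 2) / 2) := by
  have heq : (fun t ↦ t * marsagliaInvFactor t ^ 2) =ᶠ[nhds (p.1 ^ 2 + p.2 ^ 2)]
      fun t ↦ exp (-t / 2) :=
    (lt_mem_nhds hp).mono fun t ht ↦ mul_marsagliaInvFactor_sq ht
  rw [det_radialScaleFDeriv (differentiableAt_marsagliaInvFactor hp), heq.deriv_eq,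
    ((hasDerivAt_neg' _).div_const 2).exp.deriv]
  ring

theorem measurable_marsaglia : Measurable marsaglia := by
  rw [marsaglia_eq_radialScale]
  exact measurable_radialScale (by unfold marsagliaFactor; fun_prop)

theorem measurable_marsagliaInv : Measurable marsagliaInv :=
  measurable_radialScale (by unfold marsagliaInvFactor; fun_prop)

theorem map_marsagliaInv_withDensity_abs_det :
    ((volume.restrict {0}ᶜ).withDensity fun p ↦
        ENNReal.ofReal |(radialScaleFDeriv marsagliaInvFactor p).det|).map marsagliaInv =
      volume.restrict puncturedDisk := by
  rw [← image_marsagliaInv]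
  exact map_withDensity_abs_det_fderiv_eq_addHaar volume
    (measurableSet_singleton 0).compl.nullMeasurableSet
    (fun p hp ↦ (hasFDerivAt_radialScale
      (differentiableAt_marsagliaInvFactor (sq_add_sq_pos_iff.2 hp))).hasFDerivWithinAt)
    leftInvOn_marsaglia_marsagliaInv.injOn

theorem map_marsaglia_volume_restrict_eq_withDensity :
    (volume.restrict puncturedDisk).map marsaglia =
      volume.withDensity fun p ↦ ENNReal.ofReal (exp (-(p.1 ^ 2 + p.2 ^ 2) / 2) / 2) := by
  have hvol : ∀ᵐ p : ℝ × ℝ, p ∈ ({0}ᶜ : Set (ℝ × ℝ)) := compl_mem_ae_iff.2 (measure_singleton 0)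
  have hdensity : (fun p ↦ ENNReal.ofReal |(radialScaleFDeriv marsagliaInvFactor p).det|)
      =ᵐ[volume] fun p ↦ ENNReal.ofReal (exp (-(p.1 ^ 2 + p.2 ^ 2) / 2) / 2) := by
    filter_upwards [hvol] with p hp
    rw [det_fderiv_marsagliaInv (sq_add_sq_pos_iff.2 hp), abs_neg, abs_of_pos (by positivity)]
  have hν : ∀ᵐ p ∂(volume.restrict {0}ᶜ).withDensity fun p ↦
      ENNReal.ofReal |(radialScaleFDeriv marsagliaInvFactor p).det|, p ∈ ({0}ᶜ : Set _) :=
    (withDensity_absolutelyContinuous _ _).ae_le (ae_restrict_mem (measurableSet_singleton 0).compl)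
  rw [← map_marsagliaInv_withDensity_abs_det,
    Measure.map_map measurable_marsaglia measurable_marsagliaInv,
    Measure.map_congr (f := marsaglia ∘ marsagliaInv) (g := id)
      (hν.mono leftInvOn_marsaglia_marsagliaInv),
    Measure.map_id, Measure.restrict_eq_self_of_ae_mem hvol, withDensity_congr_ae hdensity]

theorem gaussianPDFReal_mul_gaussianPDFReal (x y : ℝ) :
    gaussianPDFReal 0 1 x * gaussianPDFReal 0 1 y = exp (-(x ^ 2 + y ^ 2) / 2) / (2 * π) := by
  have h2π : √(2 * π) ^ 2 = 2 * π := sq_sqrt (by positivity)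
  simp only [gaussianPDFReal, NNReal.coe_one, mul_one, sub_zero]
  rw [mul_mul_mul_comm, ← exp_add, ← mul_inv, ← sq, h2π]
  ring_nf

theorem gaussianReal_prod_gaussianReal :
    (gaussianReal 0 1).prod (gaussianReal 0 1) =
      volume.withDensity fun p ↦ ENNReal.ofReal (exp (-(p.1 ^ 2 + p.2 ^ 2) / 2) / (2 * π)) := by
  rw [gaussianReal_of_var_ne_zero 0 one_ne_zero,
    prod_withDensity (measurable_gaussianPDF 0 1) (measurable_gaussianPDF 0 1),
    ← Measure.volume_eq_prod]
  congr with p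
  rw [gaussianPDF, gaussianPDF, ← ENNReal.ofReal_mul (gaussianPDFReal_nonneg 0 1 _),
    gaussianPDFReal_mul_gaussianPDFReal]

theorem map_marsaglia_volume_restrict :
    (volume.restrict puncturedDisk).map marsaglia =
      ENNReal.ofReal π • (gaussianReal 0 1).prod (gaussianReal 0 1) := by
  rw [map_marsaglia_volume_restrict_eq_withDensity, gaussianReal_prod_gaussianReal,
    ← withDensity_smul' _ _ ENNReal.ofReal_ne_top]
  congr with p
  rw [Pi.smul_apply, smul_eq_mul, ← ENNReal.ofReal_mul pi_pos.le]
  congr 1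
  field_simp

theorem volume_puncturedDisk : volume puncturedDisk = ENNReal.ofReal π := by
  simpa [Measure.map_apply measurable_marsaglia MeasurableSet.univ] using
    congr($map_marsaglia_volume_restrict Set.univ)

/-- Marsaglia polar method: if `(U, V)` is uniformly distributed on the punctured open
unit disk, then `(X, Y) = marsaglia (U, V)` has as joint law the product of two standard
Gaussian measures; in particular `X` and `Y` are independent standard normals. -/
theorem marsaglia_polar_method :
    ((volume puncturedDisk)⁻¹ • (volume : Measure (ℝ × ℝ)).restrict puncturedDisk).map
        marsaglia =
      (gaussianReal 0 1).prod (gaussianReal 0 1) := by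
  rw [Measure.map_smul, map_marsaglia_volume_restrict, volume_puncturedDisk, smul_smul,
    ENNReal.inv_mul_cancel (ENNReal.ofReal_pos.2 pi_pos).ne' ENNReal.ofReal_ne_top, one_smul]
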